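/- Let Q be a finite quiver without sinks over a field k, L = L(Q) the Leavitt path algebra, and E = kQ₀ ⊆ L. Then there is a unique graded E-derivation D : L → ⊕_{i∈Q₀} Le_i ⊗ sk ⊗ e_iL of degree −1 satisfying D(α) = −α ⊗ s ⊗ e_{s(α)} and D(α*) = −e_{s(α)} ⊗ s ⊗ α* for every arrow α ∈ Q₁. -/

import Mathlib

noncomputable section
open scoped Classical

/-- The Koszul sign `(-1)^e`, for an integer exponent `e`. -/
def ksign (e : ℤ) : ℤ := if Even e then 1 else -1

/-- A `ℤ`-graded vector space over `k`. -/
structure GradedSpace (k : Type) [Field k] : Type 1 where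
  carrier : Type
  [acg : AddCommGroup carrier]
  [mod : Module k carrier]
  grading : ℤ → Submodule k carrier

attribute [instance] GradedSpace.acg GradedSpace.mod

/-! ## Quivers, Leavitt path algebras and radical square zero algebras -/

section Quivers

/-- a finite quiver `Q = (Q₀, Q₁; s, t)` -/
structure QuiverData : Type 1 where
  V : Type
  A : Type
  [fintypeV : Fintype V]
  [fintypeA : Fintype A]
  [decV : DecidableEq V]
  [decA : DecidableEq A]
  src : A → V
  tgt : A → V

attribute [instance] QuiverData.fintypeV QuiverData.fintypeA QuiverData.decV QuiverData.decA

/-- `Q` has no sinks: every vertex is the source of some arrow. -/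
def QuiverData.NoSinks (Q : QuiverData) : Prop := ∀ v : Q.V, ∃ a : Q.A, Q.src a = v

/-- generators of the Leavitt path algebra: vertices, arrows and ghost arrows -/
inductive LGen (Q : QuiverData) : Type
  | vertex : Q.V → LGen Q
  | arrow : Q.A → LGen Q
  | ghost : Q.A → LGen Q

variable (k : Type) [Field k] (Q : QuiverData)

open FreeAlgebra

/-- The defining relations of the Leavitt path algebra `L(Q)`: the path algebra relations
of the double quiver `Q̄` together with the first and second Cuntz–Krieger relations. -/
inductive LeavittRel : FreeAlgebra k (LGen Q) → FreeAlgebra k (LGen Q) → Prop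
  | vertex_mul (i j : Q.V) :
      LeavittRel (ι k (LGen.vertex i) * ι k (LGen.vertex j))
        (if i = j then ι k (LGen.vertex i) else 0)
  | sum_vertices : LeavittRel (∑ i : Q.V, ι k (LGen.vertex i)) 1
  | arrow_tgt (a : Q.A) :
      LeavittRel (ι k (LGen.vertex (Q.tgt a)) * ι k (LGen.arrow a)) (ι k (LGen.arrow a))
  | arrow_src (a : Q.A) :
      LeavittRel (ι k (LGen.arrow a) * ι k (LGen.vertex (Q.src a))) (ι k (LGen.arrow a))
  | ghost_src (a : Q.A) :
      LeavittRel (ι k (LGen.vertex (Q.src a)) * ι k (LGen.ghost a)) (ι k (LGen.ghost a))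
  | ghost_tgt (a : Q.A) :
      LeavittRel (ι k (LGen.ghost a) * ι k (LGen.vertex (Q.tgt a))) (ι k (LGen.ghost a))
  | ck1 (a b : Q.A) (h : Q.src a = Q.src b) :
      LeavittRel (ι k (LGen.arrow a) * ι k (LGen.ghost b))
        (if a = b then ι k (LGen.vertex (Q.tgt a)) else 0)
  | ck2 (v : Q.V) :
      LeavittRel (∑ a ∈ Finset.univ.filter (fun a => Q.src a = v),
          ι k (LGen.ghost a) * ι k (LGen.arrow a))
        (ι k (LGen.vertex v))

/-- the Leavitt path algebra `L = L(Q)` over `k` -/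
abbrev LeavittAlg := RingQuot (LeavittRel k Q)

/-- the canonical algebra map from the free algebra onto `L(Q)` -/
abbrev leavittMk : FreeAlgebra k (LGen Q) →ₐ[k] LeavittAlg k Q :=
  RingQuot.mkAlgHom k (LeavittRel k Q)

/-- the image of a generator in `L(Q)` -/
def lgen (g : LGen Q) : LeavittAlg k Q := leavittMk k Q (ι k g)

/-- the idempotent `e_i ∈ L(Q)` attached to a vertex -/
def lvert (i : Q.V) : LeavittAlg k Q := lgen k Q (LGen.vertex i)

/-- the degree of a generator: `|e_i| = 0`, `|α| = 1`, `|α*| = -1` -/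
def lgenDeg : LGen Q → ℤ
  | LGen.vertex _ => 0
  | LGen.arrow _ => 1
  | LGen.ghost _ => -1

/-- The canonical `ℤ`-grading of the Leavitt path algebra: the degree-`n` component is
spanned by the monomials in the generators of total degree `n`. -/
def leavittGrading (n : ℤ) : Submodule k (LeavittAlg k Q) :=
  Submodule.span k {x | ∃ w : List (LGen Q),
    (w.map (lgenDeg Q)).sum = n ∧ x = (w.map (lgen k Q)).prod}

/-- The Leavitt path algebra `L(Q)` as a graded space (it is viewed as a dg algebra with
zero differential). -/
def LeavittSpace : GradedSpace k where
  carrier := LeavittAlg k Q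
  grading := leavittGrading k Q

/-- generators of the path algebra `kQ` -/
inductive PGen (Q : QuiverData) : Type
  | vertex : Q.V → PGen Q
  | arrow : Q.A → PGen Q

/-- the defining relations of the radical square zero algebra `kQ/J²` -/
inductive RadSqRel : FreeAlgebra k (PGen Q) → FreeAlgebra k (PGen Q) → Prop
  | vertex_mul (i j : Q.V) :
      RadSqRel (ι k (PGen.vertex i) * ι k (PGen.vertex j))
        (if i = j then ι k (PGen.vertex i) else 0)
  | sum_vertices : RadSqRel (∑ i : Q.V, ι k (PGen.vertex i)) 1
  | arrow_tgt (a : Q.A) :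
      RadSqRel (ι k (PGen.vertex (Q.tgt a)) * ι k (PGen.arrow a)) (ι k (PGen.arrow a))
  | arrow_src (a : Q.A) :
      RadSqRel (ι k (PGen.arrow a) * ι k (PGen.vertex (Q.src a))) (ι k (PGen.arrow a))
  | arrow_orth (a : Q.A) (j : Q.V) (h : j ≠ Q.tgt a) :
      RadSqRel (ι k (PGen.vertex j) * ι k (PGen.arrow a)) 0
  | arrow_orth' (a : Q.A) (j : Q.V) (h : j ≠ Q.src a) :
      RadSqRel (ι k (PGen.arrow a) * ι k (PGen.vertex j)) 0
  | rad_sq (a b : Q.A) : RadSqRel (ι k (PGen.arrow a) * ι k (PGen.arrow b)) 0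

/-- the radical square zero algebra `Λ = kQ/J²` -/
abbrev RadSqAlg := RingQuot (RadSqRel k Q)

end Quivers

section Derivation

open TensorProduct

variable (k : Type) [Field k] (Q : QuiverData)

/-- The graded `L`-`L`-bimodule `⊕_{i∈Q₀} Le_i ⊗ sk ⊗ e_iL`, realized as the subspace of
`L ⊗ L` spanned by the elements `(a e_i) ⊗ (e_i b)`; the shift `sk` only affects degrees,
which are taken into account in `gradedDegMinusOne` below. -/
def NSub : Submodule k (LeavittAlg k Q ⊗[k] LeavittAlg k Q) :=
  Submodule.span k {z | ∃ (i : Q.V) (a b : LeavittAlg k Q),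
    z = (a * lvert k Q i) ⊗ₜ[k] (lvert k Q i * b)}

/-- the degree-`n` part of `L ⊗ L` -/
def TGrading (n : ℤ) : Submodule k (LeavittAlg k Q ⊗[k] LeavittAlg k Q) :=
  Submodule.span k {z | ∃ (m₁ m₂ : ℤ) (a b : LeavittAlg k Q),
    a ∈ leavittGrading k Q m₁ ∧ b ∈ leavittGrading k Q m₂ ∧ m₁ + m₂ = n ∧
      z = a ⊗ₜ[k] b}

/-- the left `L`-action on `L ⊗ L` -/
def lAct (x : LeavittAlg k Q) :
    LeavittAlg k Q ⊗[k] LeavittAlg k Q →ₗ[k] LeavittAlg k Q ⊗[k] LeavittAlg k Q :=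
  LinearMap.rTensor _ (LinearMap.mulLeft k x)

/-- the right `L`-action on `L ⊗ L` -/
def rAct (y : LeavittAlg k Q) :
    LeavittAlg k Q ⊗[k] LeavittAlg k Q →ₗ[k] LeavittAlg k Q ⊗[k] LeavittAlg k Q :=
  LinearMap.lTensor _ (LinearMap.mulRight k y)

end Derivation

/-!
The derivation is the top-right corner of an algebra map `L → M₂(L ⊗ L)` into upper triangular
matrices, `x ↦ [[σ x ⊗ 1, D x], [0, 1 ⊗ x]]`, where `σ` is the parity automorphism, `(-1)^n` on
degree `n`: multiplicativity of this map is exactly the graded Leibniz rule for `D`. The map is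
prescribed on generators, and it respects the Leavitt relations because the corner entry of its
lift to the free algebra, a `σ`-twisted derivation, kills every relation; for the second
Cuntz–Krieger relation this is `(Σ α*α) ⊗ e_v - e_v ⊗ (Σ α*α) = e_v ⊗ e_v - e_v ⊗ e_v = 0`.
Uniqueness: monomials in the generators span `L`, and the Leibniz rule determines `D` on a
monomial from its values on the generators.
-/

open TensorProduct
open scoped Pointwise

section TriangularMatrix

variable {k A B : Type*} [CommSemiring k] [Semiring A] [Semiring B] [Algebra k A] [Algebra k B]

lemma tmul_one_mul_eq_rTensor (a : A) (m : A ⊗[k] B) :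
    (a ⊗ₜ[k] (1 : B)) * m = LinearMap.rTensor B (LinearMap.mulLeft k a) m := by
  induction m with
  | zero => simp
  | tmul u v => simp [Algebra.TensorProduct.tmul_mul_tmul]
  | add u v hu hv => simp [mul_add, hu, hv]

lemma mul_one_tmul_eq_lTensor (b : B) (m : A ⊗[k] B) :
    m * ((1 : A) ⊗ₜ[k] b) = LinearMap.lTensor A (LinearMap.mulRight k b) m := by
  induction m with
  | zero => simp
  | tmul u v => simp [Algebra.TensorProduct.tmul_mul_tmul]
  | add u v hu hv => simp [add_mul, hu, hv]

def triMat (a : A) (d : A ⊗[k] B) (b : B) : Matrix (Fin 2) (Fin 2) (A ⊗[k] B) :=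
  !![a ⊗ₜ 1, d; 0, 1 ⊗ₜ b]

@[simp]
lemma triMat_zero_one (a : A) (d : A ⊗[k] B) (b : B) : triMat a d b 0 1 = d := rfl

lemma triMat_mul_triMat (a a' : A) (d d' : A ⊗[k] B) (b b' : B) :
    triMat a d b * triMat a' d' b' =
      triMat (a * a') (LinearMap.rTensor B (LinearMap.mulLeft k a) d' +
        LinearMap.lTensor A (LinearMap.mulRight k b') d) (b * b') := by
  simp [triMat, Algebra.TensorProduct.tmul_mul_tmul, tmul_one_mul_eq_rTensor,
    mul_one_tmul_eq_lTensor, add_comm]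

lemma triMat_add_triMat (a a' : A) (d d' : A ⊗[k] B) (b b' : B) :
    triMat a d b + triMat a' d' b' = triMat (a + a') (d + d') (b + b') := by
  simp [triMat, add_tmul, tmul_add]

lemma algebraMap_eq_triMat (r : k) :
    algebraMap k (Matrix (Fin 2) (Fin 2) (A ⊗[k] B)) r =
      triMat (algebraMap k A r) 0 (algebraMap k B r) := by
  ext i j
  fin_cases i <;> fin_cases j <;> simp [triMat, Matrix.algebraMap_matrix_apply,
    Algebra.algebraMap_eq_smul_one, Algebra.TensorProduct.one_def, smul_tmul']

end TriangularMatrix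

lemma mul_mem_span_of_mul_subset {k A : Type*} [CommSemiring k] [Semiring A] [Algebra k A]
    {S T U : Set A} (hST : S * T ⊆ U) {x y : A} (hx : x ∈ Submodule.span k S)
    (hy : y ∈ Submodule.span k T) : x * y ∈ Submodule.span k U := by
  have hxy := Submodule.mul_mem_mul hx hy
  rw [Submodule.span_mul_span] at hxy
  exact Submodule.span_mono hST hxy

lemma add_neg_one_smul_self {k M : Type*} [Ring k] [AddCommMonoid M] [Module k M] (m : M) :
    m + (-1 : k) • m = 0 := by
  nth_rewrite 1 [← one_smul k m]
  rw [← add_smul, add_neg_cancel, zero_smul]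

lemma ksign_add (a b : ℤ) : ksign (a + b) = ksign a * ksign b := by
  unfold ksign
  by_cases ha : Even a <;> by_cases hb : Even b <;> simp [Int.even_add, ha, hb]

section Leavitt

variable {k : Type} [Field k] {Q : QuiverData}

@[simp]
lemma lgen_vertex (i : Q.V) : lgen k Q (LGen.vertex i) = lvert k Q i := rfl

@[simp]
lemma leavittMk_ι (g : LGen Q) : leavittMk k Q (FreeAlgebra.ι k g) = lgen k Q g := rfl

lemma leavittMk_eq_of_rel {x y : FreeAlgebra k (LGen Q)} (h : LeavittRel k Q x y) :
    leavittMk k Q x = leavittMk k Q y :=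
  RingQuot.mkAlgHom_rel k h

lemma lvert_mul_lvert (i j : Q.V) :
    lvert k Q i * lvert k Q j = if i = j then lvert k Q i else 0 := by
  simpa [apply_ite (leavittMk k Q)] using
    leavittMk_eq_of_rel (LeavittRel.vertex_mul (k := k) i j)

lemma sum_lvert : ∑ i : Q.V, lvert k Q i = 1 := by
  simpa using leavittMk_eq_of_rel (LeavittRel.sum_vertices (k := k) (Q := Q))

lemma lvert_tgt_mul_arrow (a : Q.A) :
    lvert k Q (Q.tgt a) * lgen k Q (LGen.arrow a) = lgen k Q (LGen.arrow a) := by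
  simpa using leavittMk_eq_of_rel (LeavittRel.arrow_tgt (k := k) a)

lemma arrow_mul_lvert_src (a : Q.A) :
    lgen k Q (LGen.arrow a) * lvert k Q (Q.src a) = lgen k Q (LGen.arrow a) := by
  simpa using leavittMk_eq_of_rel (LeavittRel.arrow_src (k := k) a)

lemma lvert_src_mul_ghost (a : Q.A) :
    lvert k Q (Q.src a) * lgen k Q (LGen.ghost a) = lgen k Q (LGen.ghost a) := by
  simpa using leavittMk_eq_of_rel (LeavittRel.ghost_src (k := k) a)

lemma ghost_mul_lvert_tgt (a : Q.A) :
    lgen k Q (LGen.ghost a) * lvert k Q (Q.tgt a) = lgen k Q (LGen.ghost a) := by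
  simpa using leavittMk_eq_of_rel (LeavittRel.ghost_tgt (k := k) a)

lemma arrow_mul_ghost {a b : Q.A} (h : Q.src a = Q.src b) :
    lgen k Q (LGen.arrow a) * lgen k Q (LGen.ghost b) =
      if a = b then lvert k Q (Q.tgt a) else 0 := by
  simpa [apply_ite (leavittMk k Q)] using
    leavittMk_eq_of_rel (LeavittRel.ck1 (k := k) a b h)

lemma sum_ghost_mul_arrow (v : Q.V) :
    ∑ a ∈ Finset.univ.filter (fun a => Q.src a = v),
      lgen k Q (LGen.ghost a) * lgen k Q (LGen.arrow a) = lvert k Q v := by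
  simpa using leavittMk_eq_of_rel (LeavittRel.ck2 (k := k) (Q := Q) v)

section Lift

variable {B : Type*} [Semiring B] [Algebra k B]

def leavittLift (f : LGen Q → B)
    (hf : ∀ ⦃x y⦄, LeavittRel k Q x y → FreeAlgebra.lift k f x = FreeAlgebra.lift k f y) :
    LeavittAlg k Q →ₐ[k] B :=
  RingQuot.liftAlgHom k ⟨FreeAlgebra.lift k f, hf⟩

lemma leavittLift_mk (f : LGen Q → B)
    (hf : ∀ ⦃x y⦄, LeavittRel k Q x y → FreeAlgebra.lift k f x = FreeAlgebra.lift k f y)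
    (z : FreeAlgebra k (LGen Q)) :
    leavittLift f hf (leavittMk k Q z) = FreeAlgebra.lift k f z :=
  RingQuot.liftAlgHom_mkAlgHom_apply k _ _ z

lemma leavittLift_lgen (f : LGen Q → B)
    (hf : ∀ ⦃x y⦄, LeavittRel k Q x y → FreeAlgebra.lift k f x = FreeAlgebra.lift k f y)
    (g : LGen Q) : leavittLift f hf (lgen k Q g) = f g := by
  rw [lgen, leavittLift_mk, FreeAlgebra.lift_ι_apply]

end Lift

lemma prod_mem_leavittGrading (w : List (LGen Q)) :
    (w.map (lgen k Q)).prod ∈ leavittGrading k Q (w.map (lgenDeg Q)).sum :=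
  Submodule.subset_span ⟨w, rfl, rfl⟩

lemma lgen_mem_leavittGrading (g : LGen Q) : lgen k Q g ∈ leavittGrading k Q (lgenDeg Q g) := by
  simpa using prod_mem_leavittGrading (k := k) [g]

lemma lvert_mem_leavittGrading (i : Q.V) : lvert k Q i ∈ leavittGrading k Q 0 :=
  lgen_mem_leavittGrading (LGen.vertex i)

lemma mul_mem_leavittGrading {m n : ℤ} {x y : LeavittAlg k Q} (hx : x ∈ leavittGrading k Q m)
    (hy : y ∈ leavittGrading k Q n) : x * y ∈ leavittGrading k Q (m + n) := by
  refine mul_mem_span_of_mul_subset ?_ hx hy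
  rintro _ ⟨_, ⟨w, rfl, rfl⟩, _, ⟨w', rfl, rfl⟩, rfl⟩
  exact ⟨w ++ w', by simp, by simp⟩

variable (k Q) in
def leavittMonomials : Set (LeavittAlg k Q) :=
  Set.range fun w : List (LGen Q) => (w.map (lgen k Q)).prod

lemma span_leavittMonomials : Submodule.span k (leavittMonomials k Q) = ⊤ := by
  refine Submodule.eq_top_iff'.2 fun x => ?_
  obtain ⟨z, rfl⟩ := RingQuot.mkAlgHom_surjective k (LeavittRel k Q) x
  induction z using FreeAlgebra.induction with
  | grade0 r =>
    rw [AlgHom.commutes, Algebra.algebraMap_eq_smul_one]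
    exact Submodule.smul_mem _ _ (Submodule.subset_span ⟨[], rfl⟩)
  | grade1 g => exact Submodule.subset_span ⟨[g], by simp⟩
  | mul z w hz hw =>
    rw [map_mul]
    refine mul_mem_span_of_mul_subset ?_ hz hw
    rintro _ ⟨_, ⟨w, rfl⟩, _, ⟨w', rfl⟩, rfl⟩
    exact ⟨w ++ w', by simp⟩
  | add z w hz hw => rw [map_add]; exact add_mem hz hw

-- Signs are written as scalars `(-1 : k)`: the negation of `LeavittAlg k Q`, a `RingQuot` of a
-- `FreeAlgebra` over a field, is not reducibly that of its `Ring` instance, so `neg_mul`,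
-- `neg_tmul`, ... do not rewrite on `L` or `L ⊗ L`.
variable (k) in
def parityGen (g : LGen Q) : LeavittAlg k Q := (ksign (lgenDeg Q g) : k) • lgen k Q g

lemma lift_parityGen_rel ⦃x y : FreeAlgebra k (LGen Q)⦄ (h : LeavittRel k Q x y) :
    FreeAlgebra.lift k (parityGen k) x = FreeAlgebra.lift k (parityGen k) y := by
  induction h <;>
    simp [parityGen, lgenDeg, ksign, smul_smul, apply_ite (FreeAlgebra.lift k (parityGen k)),
      lvert_mul_lvert, sum_lvert, lvert_tgt_mul_arrow, arrow_mul_lvert_src,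
      lvert_src_mul_ghost, ghost_mul_lvert_tgt, arrow_mul_ghost, sum_ghost_mul_arrow, *]

variable (k Q) in
def parityAut : LeavittAlg k Q →ₐ[k] LeavittAlg k Q :=
  leavittLift (parityGen k) lift_parityGen_rel

lemma parityAut_lgen (g : LGen Q) : parityAut k Q (lgen k Q g) = parityGen k g :=
  leavittLift_lgen _ _ g

@[simp]
lemma parityAut_lvert (i : Q.V) : parityAut k Q (lvert k Q i) = lvert k Q i := by
  simp [← lgen_vertex, parityAut_lgen, parityGen, lgenDeg, ksign]

@[simp]
lemma parityAut_arrow (a : Q.A) :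
    parityAut k Q (lgen k Q (LGen.arrow a)) = (-1 : k) • lgen k Q (LGen.arrow a) := by
  simp [parityAut_lgen, parityGen, lgenDeg, ksign]

@[simp]
lemma parityAut_ghost (a : Q.A) :
    parityAut k Q (lgen k Q (LGen.ghost a)) = (-1 : k) • lgen k Q (LGen.ghost a) := by
  simp [parityAut_lgen, parityGen, lgenDeg, ksign]

lemma parityAut_prod (w : List (LGen Q)) :
    parityAut k Q (w.map (lgen k Q)).prod =
      (ksign (w.map (lgenDeg Q)).sum : k) • (w.map (lgen k Q)).prod := by
  induction w with
  | nil => simp [ksign]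
  | cons g w ih =>
    rw [List.map_cons, List.map_cons, List.prod_cons, List.sum_cons, map_mul, ih,
      parityAut_lgen, parityGen, ksign_add, Int.cast_mul, smul_mul_smul_comm]

lemma parityAut_of_mem_leavittGrading {n : ℤ} {x : LeavittAlg k Q}
    (hx : x ∈ leavittGrading k Q n) : parityAut k Q x = (ksign n : k) • x := by
  induction hx using Submodule.span_induction with
  | mem x hx => obtain ⟨w, rfl, rfl⟩ := hx; exact parityAut_prod w
  | zero => simp
  | add x y _ _ hx hy => rw [map_add, hx, hy, smul_add]
  | smul c x _ hx => rw [map_smul, hx, smul_comm]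

@[simp]
lemma lAct_tmul (x a b : LeavittAlg k Q) : lAct k Q x (a ⊗ₜ[k] b) = (x * a) ⊗ₜ[k] b := rfl

@[simp]
lemma rAct_tmul (y a b : LeavittAlg k Q) : rAct k Q y (a ⊗ₜ[k] b) = a ⊗ₜ[k] (b * y) := rfl

lemma lAct_smul (c : k) (x : LeavittAlg k Q) (m : LeavittAlg k Q ⊗[k] LeavittAlg k Q) :
    lAct k Q (c • x) m = c • lAct k Q x m := by
  have hmul : LinearMap.mulLeft k (c • x) = c • LinearMap.mulLeft k x :=
    LinearMap.ext fun _ => smul_mul_assoc c x _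
  rw [lAct, hmul, LinearMap.rTensor_smul]
  rfl

variable (k) in
def derivGen : LGen Q → LeavittAlg k Q ⊗[k] LeavittAlg k Q
  | LGen.vertex _ => 0
  | LGen.arrow a => (-1 : k) • (lgen k Q (LGen.arrow a) ⊗ₜ lvert k Q (Q.src a))
  | LGen.ghost a => (-1 : k) • (lvert k Q (Q.src a) ⊗ₜ lgen k Q (LGen.ghost a))

variable (k) in
def triGen (g : LGen Q) : Matrix (Fin 2) (Fin 2) (LeavittAlg k Q ⊗[k] LeavittAlg k Q) :=
  triMat (parityAut k Q (lgen k Q g)) (derivGen k g) (lgen k Q g)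

variable (k Q) in
def freeDeriv : FreeAlgebra k (LGen Q) →ₗ[k] LeavittAlg k Q ⊗[k] LeavittAlg k Q :=
  Matrix.entryLinearMap k _ 0 1 ∘ₗ (FreeAlgebra.lift k (triGen k)).toLinearMap

lemma exists_lift_triGen_eq (z : FreeAlgebra k (LGen Q)) : ∃ d,
    FreeAlgebra.lift k (triGen k) z =
      triMat (parityAut k Q (leavittMk k Q z)) d (leavittMk k Q z) := by
  induction z using FreeAlgebra.induction with
  | grade0 r => exact ⟨0, by simp only [AlgHom.commutes, algebraMap_eq_triMat]⟩
  | grade1 g => exact ⟨derivGen k g, FreeAlgebra.lift_ι_apply _ _⟩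
  | mul z w hz hw =>
    obtain ⟨d, hd⟩ := hz
    obtain ⟨d', hd'⟩ := hw
    exact ⟨_, by rw [map_mul, hd, hd', triMat_mul_triMat, map_mul, map_mul]⟩
  | add z w hz hw =>
    obtain ⟨d, hd⟩ := hz
    obtain ⟨d', hd'⟩ := hw
    exact ⟨_, by rw [map_add, hd, hd', triMat_add_triMat, map_add, map_add]⟩

lemma lift_triGen_eq (z : FreeAlgebra k (LGen Q)) :
    FreeAlgebra.lift k (triGen k) z =
      triMat (parityAut k Q (leavittMk k Q z)) (freeDeriv k Q z) (leavittMk k Q z) := by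
  obtain ⟨d, hd⟩ := exists_lift_triGen_eq z
  simp [freeDeriv, hd]

@[simp]
lemma freeDeriv_mul (z w : FreeAlgebra k (LGen Q)) :
    freeDeriv k Q (z * w) = lAct k Q (parityAut k Q (leavittMk k Q z)) (freeDeriv k Q w) +
      rAct k Q (leavittMk k Q w) (freeDeriv k Q z) := by
  have h := congrArg (· 0 1) (map_mul (FreeAlgebra.lift k (triGen k)) z w)
  simp only [lift_triGen_eq, triMat_mul_triMat, triMat_zero_one] at h
  exact h

@[simp]
lemma freeDeriv_ι (g : LGen Q) : freeDeriv k Q (FreeAlgebra.ι k g) = derivGen k g := by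
  simp [freeDeriv, triGen]

@[simp]
lemma freeDeriv_one : freeDeriv k Q 1 = 0 := by
  simp [freeDeriv]

lemma freeDeriv_ghost_mul_arrow (a : Q.A) :
    freeDeriv k Q (FreeAlgebra.ι k (LGen.ghost a) * FreeAlgebra.ι k (LGen.arrow a)) =
      (lgen k Q (LGen.ghost a) * lgen k Q (LGen.arrow a)) ⊗ₜ lvert k Q (Q.src a) +
        (-1 : k) •
          (lvert k Q (Q.src a) ⊗ₜ (lgen k Q (LGen.ghost a) * lgen k Q (LGen.arrow a))) := by
  simp [derivGen, smul_smul, ← smul_tmul']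

lemma freeDeriv_rel ⦃x y : FreeAlgebra k (LGen Q)⦄ (h : LeavittRel k Q x y) :
    freeDeriv k Q x = freeDeriv k Q y := by
  induction h with
  | vertex_mul i j => split_ifs <;> simp [derivGen]
  | sum_vertices => simp [derivGen]
  | arrow_tgt a => simp [derivGen, lvert_tgt_mul_arrow]
  | arrow_src a => simp [derivGen, lvert_mul_lvert]
  | ghost_src a => simp [derivGen, lvert_mul_lvert]
  | ghost_tgt a => simp [derivGen, ghost_mul_lvert_tgt]
  | ck1 a b h =>
    have ha : lgen k Q (LGen.arrow a) * lvert k Q (Q.src b) = lgen k Q (LGen.arrow a) :=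
      h ▸ arrow_mul_lvert_src a
    have hb : lvert k Q (Q.src a) * lgen k Q (LGen.ghost b) = lgen k Q (LGen.ghost b) :=
      h ▸ lvert_src_mul_ghost b
    split_ifs <;> simp [derivGen, ha, hb, smul_smul, ← smul_tmul', add_neg_one_smul_self]
  | ck2 v =>
    rw [map_sum, Finset.sum_congr rfl fun a ha => by
      rw [freeDeriv_ghost_mul_arrow, (Finset.mem_filter.1 ha).2]]
    rw [Finset.sum_add_distrib, ← Finset.smul_sum, ← sum_tmul, ← tmul_sum, sum_ghost_mul_arrow,
      add_neg_one_smul_self, freeDeriv_ι, derivGen]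

lemma lift_triGen_rel ⦃x y : FreeAlgebra k (LGen Q)⦄ (h : LeavittRel k Q x y) :
    FreeAlgebra.lift k (triGen k) x = FreeAlgebra.lift k (triGen k) y := by
  rw [lift_triGen_eq, lift_triGen_eq, leavittMk_eq_of_rel h, freeDeriv_rel h]

variable (k Q) in
def leavittTri :
    LeavittAlg k Q →ₐ[k] Matrix (Fin 2) (Fin 2) (LeavittAlg k Q ⊗[k] LeavittAlg k Q) :=
  leavittLift (triGen k) lift_triGen_rel

variable (k Q) in
def leavittDeriv : LeavittAlg k Q →ₗ[k] LeavittAlg k Q ⊗[k] LeavittAlg k Q :=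
  Matrix.entryLinearMap k _ 0 1 ∘ₗ (leavittTri k Q).toLinearMap

lemma leavittDeriv_mk (z : FreeAlgebra k (LGen Q)) :
    leavittDeriv k Q (leavittMk k Q z) = freeDeriv k Q z := by
  simp [leavittDeriv, freeDeriv, leavittTri, leavittLift_mk]

lemma leavittTri_eq (x : LeavittAlg k Q) :
    leavittTri k Q x = triMat (parityAut k Q x) (leavittDeriv k Q x) x := by
  obtain ⟨z, rfl⟩ := RingQuot.mkAlgHom_surjective k (LeavittRel k Q) x
  rw [leavittDeriv_mk]
  exact (leavittLift_mk _ _ z).trans (lift_triGen_eq z)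

lemma leavittDeriv_mul (x y : LeavittAlg k Q) :
    leavittDeriv k Q (x * y) =
      rAct k Q y (leavittDeriv k Q x) + lAct k Q (parityAut k Q x) (leavittDeriv k Q y) := by
  have h := congrArg (· 0 1) (map_mul (leavittTri k Q) x y)
  simp only [leavittTri_eq, triMat_mul_triMat, triMat_zero_one] at h
  rw [h, add_comm]
  rfl

lemma leavittDeriv_lgen (g : LGen Q) : leavittDeriv k Q (lgen k Q g) = derivGen k g :=
  (leavittDeriv_mk (FreeAlgebra.ι k g)).trans (freeDeriv_ι g)

lemma leavittDeriv_one : leavittDeriv k Q 1 = 0 := by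
  simpa using leavittDeriv_mk (1 : FreeAlgebra k (LGen Q))

lemma leavittDeriv_lvert (i : Q.V) : leavittDeriv k Q (lvert k Q i) = 0 :=
  leavittDeriv_lgen (LGen.vertex i)

lemma leavittDeriv_arrow (a : Q.A) : leavittDeriv k Q (lgen k Q (LGen.arrow a)) =
    -(lgen k Q (LGen.arrow a) ⊗ₜ[k] lvert k Q (Q.src a)) :=
  (leavittDeriv_lgen (LGen.arrow a)).trans
    (neg_one_smul k (lgen k Q (LGen.arrow a) ⊗ₜ[k] lvert k Q (Q.src a)))

lemma leavittDeriv_ghost (a : Q.A) : leavittDeriv k Q (lgen k Q (LGen.ghost a)) =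
    -(lvert k Q (Q.src a) ⊗ₜ[k] lgen k Q (LGen.ghost a)) :=
  (leavittDeriv_lgen (LGen.ghost a)).trans
    (neg_one_smul k (lvert k Q (Q.src a) ⊗ₜ[k] lgen k Q (LGen.ghost a)))

lemma nSub_le_comap_lAct (x : LeavittAlg k Q) : NSub k Q ≤ (NSub k Q).comap (lAct k Q x) :=
  Submodule.span_le.2 <| by
    rintro _ ⟨i, a, b, rfl⟩
    exact Submodule.subset_span ⟨i, x * a, b, by rw [lAct_tmul, mul_assoc]⟩

lemma nSub_le_comap_rAct (y : LeavittAlg k Q) : NSub k Q ≤ (NSub k Q).comap (rAct k Q y) :=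
  Submodule.span_le.2 <| by
    rintro _ ⟨i, a, b, rfl⟩
    exact Submodule.subset_span ⟨i, a, b * y, by rw [rAct_tmul, mul_assoc]⟩

lemma tGrading_le_comap_lAct {m : ℤ} {x : LeavittAlg k Q} (hx : x ∈ leavittGrading k Q m)
    (n : ℤ) : TGrading k Q n ≤ (TGrading k Q (m + n)).comap (lAct k Q x) :=
  Submodule.span_le.2 <| by
    rintro _ ⟨m₁, m₂, a, b, ha, hb, rfl, rfl⟩
    exact Submodule.subset_span
      ⟨m + m₁, m₂, x * a, b, mul_mem_leavittGrading hx ha, hb, by ring, rfl⟩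

lemma tGrading_le_comap_rAct {m : ℤ} {y : LeavittAlg k Q} (hy : y ∈ leavittGrading k Q m)
    (n : ℤ) : TGrading k Q n ≤ (TGrading k Q (n + m)).comap (rAct k Q y) :=
  Submodule.span_le.2 <| by
    rintro _ ⟨m₁, m₂, a, b, ha, hb, rfl, rfl⟩
    exact Submodule.subset_span
      ⟨m₁, m₂ + m, a, b * y, ha, mul_mem_leavittGrading hb hy, by ring, rfl⟩

lemma derivGen_mem_nSub (g : LGen Q) : derivGen k g ∈ NSub k Q := by
  cases g with
  | vertex i => exact zero_mem _
  | arrow a =>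
    exact Submodule.smul_mem _ _ <| Submodule.subset_span
      ⟨Q.src a, lgen k Q (LGen.arrow a), 1, by rw [arrow_mul_lvert_src, mul_one]⟩
  | ghost a =>
    exact Submodule.smul_mem _ _ <| Submodule.subset_span
      ⟨Q.src a, 1, lgen k Q (LGen.ghost a), by rw [one_mul, lvert_src_mul_ghost]⟩

lemma derivGen_mem_tGrading (g : LGen Q) : derivGen k g ∈ TGrading k Q (lgenDeg Q g) := by
  cases g with
  | vertex i => exact zero_mem _
  | arrow a =>
    exact Submodule.smul_mem _ _ <| Submodule.subset_span ⟨1, 0, _, _,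
      lgen_mem_leavittGrading (LGen.arrow a), lvert_mem_leavittGrading (Q.src a), rfl, rfl⟩
  | ghost a =>
    exact Submodule.smul_mem _ _ <| Submodule.subset_span ⟨0, -1, _, _,
      lvert_mem_leavittGrading (Q.src a), lgen_mem_leavittGrading (LGen.ghost a), rfl, rfl⟩

lemma leavittDeriv_prod_mem_nSub (w : List (LGen Q)) :
    leavittDeriv k Q (w.map (lgen k Q)).prod ∈ NSub k Q := by
  induction w with
  | nil =>
    rw [List.map_nil, List.prod_nil, leavittDeriv_one]
    exact zero_mem _
  | cons g w ih =>
    rw [List.map_cons, List.prod_cons, leavittDeriv_mul, leavittDeriv_lgen]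
    exact add_mem (nSub_le_comap_rAct _ (derivGen_mem_nSub g)) (nSub_le_comap_lAct _ ih)

lemma leavittDeriv_prod_mem_tGrading (w : List (LGen Q)) :
    leavittDeriv k Q (w.map (lgen k Q)).prod ∈ TGrading k Q (w.map (lgenDeg Q)).sum := by
  induction w with
  | nil =>
    simp only [List.map_nil, List.prod_nil, List.sum_nil, leavittDeriv_one]
    exact zero_mem _
  | cons g w ih =>
    rw [List.map_cons, List.map_cons, List.prod_cons, List.sum_cons, leavittDeriv_mul,
      leavittDeriv_lgen, parityAut_lgen, parityGen, lAct_smul]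
    exact add_mem
      (tGrading_le_comap_rAct (prod_mem_leavittGrading w) _ (derivGen_mem_tGrading g))
      (Submodule.smul_mem _ _ (tGrading_le_comap_lAct (lgen_mem_leavittGrading g) _ ih))

lemma leavittDeriv_mem_nSub (x : LeavittAlg k Q) : leavittDeriv k Q x ∈ NSub k Q := by
  have hle : Submodule.span k (leavittMonomials k Q) ≤ (NSub k Q).comap (leavittDeriv k Q) :=
    Submodule.span_le.2 <| by
      rintro _ ⟨w, rfl⟩
      exact leavittDeriv_prod_mem_nSub w
  exact hle (Submodule.eq_top_iff'.1 span_leavittMonomials x)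

lemma leavittDeriv_mem_tGrading {n : ℤ} {x : LeavittAlg k Q} (hx : x ∈ leavittGrading k Q n) :
    leavittDeriv k Q x ∈ TGrading k Q n := by
  refine (Submodule.span_le (p := (TGrading k Q n).comap (leavittDeriv k Q))).2 ?_ hx
  rintro _ ⟨w, rfl, rfl⟩
  exact leavittDeriv_prod_mem_tGrading w

def IsGradedLeibniz (D : LeavittAlg k Q →ₗ[k] LeavittAlg k Q ⊗[k] LeavittAlg k Q) : Prop :=
  ∀ (n : ℤ) (x y : LeavittAlg k Q), x ∈ leavittGrading k Q n →
    D (x * y) = rAct k Q y (D x) + ksign n • lAct k Q x (D y)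

lemma isGradedLeibniz_leavittDeriv : IsGradedLeibniz (leavittDeriv k Q) := by
  intro n x y hx
  rw [leavittDeriv_mul, parityAut_of_mem_leavittGrading hx, lAct_smul]
  exact congrArg _ (Int.cast_smul_eq_zsmul k (ksign n) (lAct k Q x (leavittDeriv k Q y)))

lemma IsGradedLeibniz.ext {D D' : LeavittAlg k Q →ₗ[k] LeavittAlg k Q ⊗[k] LeavittAlg k Q}
    (hD : IsGradedLeibniz D) (hD' : IsGradedLeibniz D')
    (h : ∀ g, D (lgen k Q g) = D' (lgen k Q g)) : D = D' := by
  have h1 : D 1 = D' 1 := by simp only [← sum_lvert, map_sum, ← lgen_vertex, h]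
  refine LinearMap.ext_on span_leavittMonomials ?_
  rintro _ ⟨w, rfl⟩
  induction w with
  | nil => exact h1
  | cons g w ih =>
    simp only [List.map_cons, List.prod_cons]
    rw [hD _ _ _ (lgen_mem_leavittGrading g), hD' _ _ _ (lgen_mem_leavittGrading g), h, ih]

end Leavitt

open TensorProduct in
/-- The shift `sk` is suppressed, so "degree `-1`" reads: `D` maps degree `n` to degree `n`. -/
theorem leavitt_unique_graded_derivation_general (k : Type) [Field k]
    (Q : QuiverData) :
    ∃! D : LeavittAlg k Q →ₗ[k] (LeavittAlg k Q ⊗[k] LeavittAlg k Q),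
      (∀ x, D x ∈ NSub k Q) ∧
      (∀ (n : ℤ) (x), x ∈ leavittGrading k Q n → D x ∈ TGrading k Q n) ∧
      (∀ (n : ℤ) (x y : LeavittAlg k Q), x ∈ leavittGrading k Q n →
        D (x * y) = rAct k Q y (D x) + ksign n • lAct k Q x (D y)) ∧
      (∀ i : Q.V, D (lvert k Q i) = 0) ∧
      (∀ a : Q.A, D (lgen k Q (LGen.arrow a)) =
        -(lgen k Q (LGen.arrow a) ⊗ₜ[k] lvert k Q (Q.src a))) ∧
      ∀ a : Q.A, D (lgen k Q (LGen.ghost a)) =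
        -(lvert k Q (Q.src a) ⊗ₜ[k] lgen k Q (LGen.ghost a)) := by
  refine ⟨leavittDeriv k Q, ⟨leavittDeriv_mem_nSub, fun _ _ => leavittDeriv_mem_tGrading,
    isGradedLeibniz_leavittDeriv, leavittDeriv_lvert, leavittDeriv_arrow, leavittDeriv_ghost⟩, ?_⟩
  rintro D ⟨-, -, hLeibniz, hvert, harrow, hghost⟩
  refine IsGradedLeibniz.ext hLeibniz isGradedLeibniz_leavittDeriv ?_
  rintro (i | a | a)
  · rw [lgen_vertex, hvert, leavittDeriv_lvert]
  · rw [harrow, leavittDeriv_arrow]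
  · rw [hghost, leavittDeriv_ghost]

open TensorProduct in
/-- **Lemma 4.3 of Chen–Li–Wang.**  Let `Q` be a finite quiver without sinks over a field
`k`, `L = L(Q)` the Leavitt path algebra and `E = kQ₀ ⊆ L`.  Then there is a unique graded
`E`-derivation `D : L → ⊕_{i∈Q₀} Le_i ⊗ sk ⊗ e_iL` of degree `-1` satisfying
`D(α) = -α ⊗ s ⊗ e_{s(α)}` and `D(α*) = -e_{s(α)} ⊗ s ⊗ α*` for every arrow `α ∈ Q₁`.

Here the bimodule `⊕_i Le_i ⊗ sk ⊗ e_iL` is realized as the subspace `NSub` of `L ⊗ L`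
spanned by the elements `(a e_i) ⊗ (e_i b)` (the invertible marker `s` of degree `-1` is
suppressed), so that "`D` has degree `-1`" becomes: `D` sends the degree-`n` component of
`L` into the degree-`n` component of `L ⊗ L`; the graded Leibniz rule
`D(xy) = D(x)y + (-1)^{|x|} x D(y)` and the conditions `D(e_i) = 0` are imposed on
homogeneous elements. -/
theorem leavitt_unique_graded_derivation (k : Type) [Field k]
    (Q : QuiverData) (hQ : Q.NoSinks) :
    ∃! D : LeavittAlg k Q →ₗ[k] (LeavittAlg k Q ⊗[k] LeavittAlg k Q),
      (∀ x, D x ∈ NSub k Q) ∧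
      (∀ (n : ℤ) (x), x ∈ leavittGrading k Q n → D x ∈ TGrading k Q n) ∧
      (∀ (n : ℤ) (x y : LeavittAlg k Q), x ∈ leavittGrading k Q n →
        D (x * y) = rAct k Q y (D x) + ksign n • lAct k Q x (D y)) ∧
      (∀ i : Q.V, D (lvert k Q i) = 0) ∧
      (∀ a : Q.A, D (lgen k Q (LGen.arrow a)) =
        -(lgen k Q (LGen.arrow a) ⊗ₜ[k] lvert k Q (Q.src a))) ∧
      ∀ a : Q.A, D (lgen k Q (LGen.ghost a)) =
        -(lvert k Q (Q.src a) ⊗ₜ[k] lgen k Q (LGen.ghost a)) :=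
  leavitt_unique_graded_derivation_general k Q
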